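/- Let T>0, a>0, x>0, and 0<t<T. For λ>0 and γ≥0 define F(γ,λ) = x·e^{−γt/(6λ)}·sinh((T−t)√(γ²+12aλ)/(6λ))/sinh(T√(γ²+12aλ)/(6λ)). Then for each fixed λ>0 the map γ ↦ F(γ,λ) is strictly decreasing on [0,∞), and for each fixed γ≥0 the map λ ↦ F(γ,λ) is strictly increasing on (0,∞). -/

import Mathlib

open Set

/-- The common equilibrium strategy of two identical agents at time `t`,
as a function of the permanent impact `γ` and the temporary impact `λ`;
here `a = ασ²`. -/
noncomputable def Fql (T a x t gam lam : ℝ) : ℝ :=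
  x * Real.exp (-(gam * t) / (6 * lam))
    * Real.sinh ((T - t) * Real.sqrt (gam ^ 2 + 12 * a * lam) / (6 * lam))
    / Real.sinh (T * Real.sqrt (gam ^ 2 + 12 * a * lam) / (6 * lam))


lemma sinh_strictConvexOn : StrictConvexOn ℝ (Ici 0) Real.sinh := by
  apply strictConvexOn_of_deriv2_pos (convex_Ici 0) Real.continuous_sinh.continuousOn
  intro x hx
  rw [interior_Ici] at hx
  have h2 : deriv^[2] Real.sinh = Real.sinh := by
    ext y
    simp [Function.iterate_succ, Real.deriv_sinh, Real.deriv_cosh]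
  rw [h2]
  exact Real.sinh_pos_iff.mpr hx

-- q sinh p < p sinh q for 0 < p < q
lemma sinh_ratio_lt {p q : ℝ} (hp : 0 < p) (hpq : p < q) :
    q * Real.sinh p < p * Real.sinh q := by
  have hq : 0 < q := hp.trans hpq
  have hb : 0 < p / q := by positivity
  have hb1 : p / q < 1 := (div_lt_one hq).mpr hpq
  have h := sinh_strictConvexOn.2 (show (0:ℝ) ∈ Ici (0:ℝ) from self_mem_Ici)
    (show q ∈ Ici (0:ℝ) from mem_Ici.mpr hq.le)
    (ne_of_lt hq) (by linarith : (0:ℝ) < 1 - p/q) hb (by ring)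
  simp only [smul_eq_mul, mul_zero, Real.sinh_zero, zero_add] at h
  rw [div_mul_cancel₀ _ (ne_of_gt hq)] at h
  have h2 : p / q * Real.sinh q = p * Real.sinh q / q := by ring
  rw [h2, lt_div_iff₀ hq] at h
  linarith

-- x cosh x sinh y < y cosh y sinh x for 0 < x < y
lemma coth_mono_aux {x y : ℝ} (hx : 0 < x) (hxy : x < y) :
    x * Real.cosh x * Real.sinh y < y * Real.cosh y * Real.sinh x := by
  have h := sinh_ratio_lt (show (0:ℝ) < y - x by linarith) (show y - x < x + y by linarith)
  rw [Real.sinh_sub, Real.sinh_add] at h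
  nlinarith

lemma sinh_ratio_strictAnti {c : ℝ} (hc : 0 < c) (hc1 : c < 1) :
    StrictAntiOn (fun s => Real.sinh (c * s) / Real.sinh s) (Ioi 0) := by
  apply strictAntiOn_of_deriv_neg (convex_Ioi 0)
  · exact ContinuousOn.div
      ((Real.continuous_sinh.comp (continuous_const.mul continuous_id)).continuousOn)
      Real.continuous_sinh.continuousOn
      (fun s hs => ne_of_gt (Real.sinh_pos_iff.mpr hs))
  · intro s hs
    rw [interior_Ioi] at hs
    have hs0 : (0:ℝ) < s := hs
    have hsinh : 0 < Real.sinh s := Real.sinh_pos_iff.mpr hs0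
    have h1 : HasDerivAt (fun u : ℝ => Real.sinh (c * u)) (Real.cosh (c * s) * c) s := by
      have := (Real.hasDerivAt_sinh (c * s)).comp s ((hasDerivAt_id s).const_mul c)
      exact this.congr_deriv (by ring)
    have h2 : HasDerivAt Real.sinh (Real.cosh s) s := Real.hasDerivAt_sinh s
    have hD := h1.div h2 (ne_of_gt hsinh)
    rw [show (fun s => Real.sinh (c * s) / Real.sinh s) = ((fun u => Real.sinh (c * u)) / Real.sinh) from rfl, hD.deriv]
    apply div_neg_of_neg_of_pos
    · have key := coth_mono_aux (show 0 < c * s by positivity)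
        (show c * s < s by nlinarith)
      nlinarith [Real.cosh_pos (x := c * s), Real.cosh_pos (x := s)]
    · positivity

lemma Fql_eq (T a x t g lam : ℝ) (hT : T ≠ 0) (hlam : lam ≠ 0) :
    Fql T a x t g lam = x * Real.exp (-(g * t) / (6 * lam)) *
      (Real.sinh (((T - t) / T) * (T * (Real.sqrt (g ^ 2 + 12 * a * lam) / (6 * lam)))) /
       Real.sinh (T * (Real.sqrt (g ^ 2 + 12 * a * lam) / (6 * lam)))) := by
  unfold Fql
  rw [mul_div_assoc]
  congr 3
  · field_simp
  · field_simp

/-- for fixed `λ > 0` the map `γ ↦ F(γ,λ)` is strictly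
decreasing on `[0,∞)`, and for fixed `γ ≥ 0` the map `λ ↦ F(γ,λ)` is strictly
increasing on `(0,∞)`. -/
theorem stmt_10 (T a x t : ℝ) (hT : 0 < T) (ha : 0 < a) (hx : 0 < x)
    (ht0 : 0 < t) (htT : t < T) :
    (∀ lam : ℝ, 0 < lam →
      StrictAntiOn (fun gam => Fql T a x t gam lam) (Ici 0)) ∧
    (∀ gam : ℝ, 0 ≤ gam →
      StrictMonoOn (fun lam => Fql T a x t gam lam) (Ioi 0)) := by
  have hTt : 0 < T - t := by linarith
  have hc0 : 0 < (T - t) / T := by positivity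
  have hc1 : (T - t) / T < 1 := by rw [div_lt_one hT]; linarith
  have hR := sinh_ratio_strictAnti hc0 hc1
  constructor
  · intro lam hlam g1 hg1 g2 hg2 h12
    simp only [mem_Ici] at hg1 hg2
    set θ1 := Real.sqrt (g1 ^ 2 + 12 * a * lam) / (6 * lam) with hθ1
    set θ2 := Real.sqrt (g2 ^ 2 + 12 * a * lam) / (6 * lam) with hθ2
    have hθ1pos : 0 < θ1 := by
      apply div_pos (Real.sqrt_pos.mpr (by positivity)) (by positivity)
    have hθ2pos : 0 < θ2 := by
      apply div_pos (Real.sqrt_pos.mpr (by positivity)) (by positivity)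
    have hθlt : θ1 < θ2 := by
      apply div_lt_div_of_pos_right ?_ (by positivity)
      apply Real.sqrt_lt_sqrt (by positivity)
      nlinarith
    have hs1 : T * θ1 ∈ Ioi (0:ℝ) := by exact mul_pos hT hθ1pos
    have hs2 : T * θ2 ∈ Ioi (0:ℝ) := by exact mul_pos hT hθ2pos
    have hRlt := hR hs1 hs2 (by nlinarith)
    simp only at hRlt
    have hR2pos : 0 < Real.sinh ((T - t) / T * (T * θ2)) / Real.sinh (T * θ2) := by
      apply div_pos (Real.sinh_pos_iff.mpr (by positivity)) (Real.sinh_pos_iff.mpr (by positivity))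
    have hE : Real.exp (-(g2 * t) / (6 * lam)) < Real.exp (-(g1 * t) / (6 * lam)) := by
      apply Real.exp_lt_exp.mpr
      rw [div_lt_div_iff₀ (by positivity) (by positivity)]
      have hh := mul_lt_mul_of_pos_right h12 (show (0:ℝ) < t * (6 * lam) by positivity)
      nlinarith [hh]
    have hEpos : 0 < Real.exp (-(g1 * t) / (6 * lam)) := Real.exp_pos _
    simp only
    rw [Fql_eq T a x t g1 lam (ne_of_gt hT) (ne_of_gt hlam),
        Fql_eq T a x t g2 lam (ne_of_gt hT) (ne_of_gt hlam)]
    have hfin := mul_lt_mul hE (le_of_lt hRlt) hR2pos (le_of_lt hEpos)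
    nlinarith [mul_pos hx (sub_pos.mpr hfin)]
  · intro gam hgam l1 hl1 l2 hl2 h12
    simp only [mem_Ioi] at hl1 hl2
    have key : ∀ l : ℝ, 0 < l → Real.sqrt (gam ^ 2 + 12 * a * l) / (6 * l)
        = Real.sqrt ((gam ^ 2 + 12 * a * l) / (36 * l ^ 2)) := by
      intro l hl
      rw [Real.sqrt_div (by positivity), show (36:ℝ) * l ^ 2 = (6 * l) ^ 2 by ring,
        Real.sqrt_sq (by positivity)]
    set θ1 := Real.sqrt (gam ^ 2 + 12 * a * l1) / (6 * l1) with hθ1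
    set θ2 := Real.sqrt (gam ^ 2 + 12 * a * l2) / (6 * l2) with hθ2
    have hθ1pos : 0 < θ1 := by
      apply div_pos (Real.sqrt_pos.mpr (by positivity)) (by positivity)
    have hθ2pos : 0 < θ2 := by
      apply div_pos (Real.sqrt_pos.mpr (by positivity)) (by positivity)
    have hθlt : θ2 < θ1 := by
      rw [hθ1, hθ2, key l1 hl1, key l2 hl2]
      apply Real.sqrt_lt_sqrt (by positivity)
      rw [div_lt_div_iff₀ (by positivity) (by positivity)]
      nlinarith [sq_nonneg gam, mul_pos (mul_pos hl1 hl2) (sub_pos.mpr h12),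
        mul_nonneg (sq_nonneg gam) (mul_nonneg (sub_pos.mpr h12).le (by positivity : (0:ℝ) ≤ l1 + l2))]
    have hs1 : T * θ1 ∈ Ioi (0:ℝ) := by exact mul_pos hT hθ1pos
    have hs2 : T * θ2 ∈ Ioi (0:ℝ) := by exact mul_pos hT hθ2pos
    have hRlt := hR hs2 hs1 (by nlinarith)
    simp only at hRlt
    have hR1pos : 0 < Real.sinh ((T - t) / T * (T * θ1)) / Real.sinh (T * θ1) := by
      apply div_pos (Real.sinh_pos_iff.mpr (by positivity)) (Real.sinh_pos_iff.mpr (by positivity))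
    have hE : Real.exp (-(gam * t) / (6 * l1)) ≤ Real.exp (-(gam * t) / (6 * l2)) := by
      apply Real.exp_le_exp.mpr
      rw [div_le_div_iff₀ (by positivity) (by positivity)]
      have hh := mul_le_mul_of_nonneg_left h12.le (mul_nonneg hgam ht0.le)
      nlinarith [hh]
    have hEpos : 0 < Real.exp (-(gam * t) / (6 * l2)) := Real.exp_pos _
    simp only
    rw [Fql_eq T a x t gam l1 (ne_of_gt hT) (ne_of_gt hl1),
        Fql_eq T a x t gam l2 (ne_of_gt hT) (ne_of_gt hl2)]
    have hfin := mul_lt_mul' hE hRlt (le_of_lt hR1pos) hEpos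
    nlinarith [mul_pos hx (sub_pos.mpr hfin)]
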